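/- For every prime number p with p = 31 or p ≥ 35 there exist natural numbers i, j with i < p − 1 and j < p − 1 such that, setting a₁ = ⌈(p−1)·(2/5)⌉, a₂ = ⌈(p−1)·(2/3)⌉, a₃ = ⌈(p−1)·(5/6)⌉, the coefficient of x^i y^j in the polynomial x^{a₁} · y^{a₂} · (x+y)^{a₃} of 𝔽_p[x,y] is nonzero. -/

import Mathlib

/-!
Take `i = p - 2`, the largest admissible power of `x`, so that the monomial `x ^ i y ^ j` of degree
`a₁ + a₂ + a₃` has the smallest possible `j`. Its coefficient is `C(a₃, p - 2 - a₁)`, a unit mod `p`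
because `a₃ < p`, and `j < p - 1` amounts to `a₁ + a₂ + a₃ ≤ 2p - 4`, which holds for the listed
primes because `2/5 + 2/3 + 5/6 = 19/10 < 2` (for `p ≤ 43` the rounding in the ceilings matters,
and there one uses that `p` is prime to `30`).
-/

open MvPolynomial

theorem Nat.ceil_natCast_div_natCast {K : Type*} [Semifield K] [LinearOrder K]
    [IsStrictOrderedRing K] [FloorSemiring K] (m : ℕ) {n : ℕ} (hn : 0 < n) :
    ⌈(m : K) / n⌉₊ = m ⌈/⌉ n := by
  refine eq_of_forall_ge_iff fun c => ?_
  rw [Nat.ceil_le, div_le_iff₀ (by exact_mod_cast hn), ceilDiv_le_iff_le_mul hn, mul_comm]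
  exact_mod_cast Iff.rfl

lemma Nat.ceil_natCast_sub_one_mul_div {K : Type*} [Field K] [LinearOrder K]
    [IsStrictOrderedRing K] [FloorSemiring K] {p : ℕ} (hp : 1 ≤ p) (a : ℕ) {b : ℕ} (hb : 0 < b) :
    ⌈((p : K) - 1) * (a / b)⌉₊ = ((p - 1) * a + b - 1) / b := by
  rw [← mul_div_assoc, ← Nat.cast_pred hp, ← Nat.cast_mul, Nat.ceil_natCast_div_natCast _ hb,
    Nat.ceilDiv_eq_add_pred_div]

lemma Nat.Prime.not_dvd_of_one_lt_of_lt {p q : ℕ} (hp : p.Prime) (hq : 1 < q) (hqp : q < p) :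
    ¬ q ∣ p := fun h => by
  rcases hp.eq_one_or_self_of_dvd q h with h | h <;> omega

lemma Nat.Prime.choose_ne_zero_of_lt {p c : ℕ} (hp : p.Prime) (hc : c < p) {k : ℕ} (hk : k ≤ c) :
    (c.choose k : ZMod p) ≠ 0 := by
  rw [Ne, ZMod.natCast_eq_zero_iff]
  exact (Nat.Prime.coprime_iff_not_dvd hp).mp (hp.coprime_choose_of_lt hc hk)

lemma MvPolynomial.coeff_X_pow_mul_X_pow_mul_add_pow {R : Type*} [CommSemiring R]
    (a b : ℕ) {c k : ℕ} (hk : k ≤ c) :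
    coeff (Finsupp.single 0 (a + k) + Finsupp.single 1 (b + (c - k)))
      ((X 0 : MvPolynomial (Fin 2) R) ^ a * X 1 ^ b * (X 0 + X 1) ^ c) = (c.choose k : R) := by
  have hexp : Finsupp.single (0 : Fin 2) (a + k) + Finsupp.single 1 (b + (c - k)) =
      (Finsupp.single 0 a + Finsupp.single 1 b) + (Finsupp.single 0 k + Finsupp.single 1 (c - k)) := by
    simp only [Finsupp.single_add]
    abel
  rw [hexp, X_pow_eq_monomial, X_pow_eq_monomial, monomial_mul, one_mul, coeff_monomial_mul,
    one_mul, coeff_add_pow]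
  simp [hk]

/-- The `e = 1` case of Case 1 of Proposition 3.8. -/
theorem stmt_9 (p : ℕ) (hp : p.Prime) (hp' : p = 31 ∨ 35 ≤ p) :
    ∃ i j : ℕ, i < p - 1 ∧ j < p - 1 ∧
      MvPolynomial.coeff (Finsupp.single 0 i + Finsupp.single 1 j)
        ((X 0 : MvPolynomial (Fin 2) (ZMod p)) ^ ⌈((p : ℚ) - 1) * (2 / 5)⌉₊ *
          X 1 ^ ⌈((p : ℚ) - 1) * (2 / 3)⌉₊ *
          (X 0 + X 1) ^ ⌈((p : ℚ) - 1) * (5 / 6)⌉₊) ≠ 0 := by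
  have hp1 : 1 ≤ p := hp.one_lt.le
  have e₁ := Nat.ceil_natCast_sub_one_mul_div (K := ℚ) hp1 2 (b := 5) (by norm_num)
  have e₂ := Nat.ceil_natCast_sub_one_mul_div (K := ℚ) hp1 2 (b := 3) (by norm_num)
  have e₃ := Nat.ceil_natCast_sub_one_mul_div (K := ℚ) hp1 5 (b := 6) (by norm_num)
  push_cast at e₁ e₂ e₃
  rw [e₁, e₂, e₃]
  have h₂ := hp.not_dvd_of_one_lt_of_lt (q := 2) (by norm_num) (by omega)
  have h₃ := hp.not_dvd_of_one_lt_of_lt (q := 3) (by norm_num) (by omega)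
  have h₅ := hp.not_dvd_of_one_lt_of_lt (q := 5) (by norm_num) (by omega)
  set a₁ := ((p - 1) * 2 + 4) / 5 with ha₁
  set a₂ := ((p - 1) * 2 + 2) / 3 with ha₂
  set a₃ := ((p - 1) * 5 + 5) / 6 with ha₃
  have hk : p - 2 - a₁ ≤ a₃ := by omega
  refine ⟨a₁ + (p - 2 - a₁), a₂ + (a₃ - (p - 2 - a₁)), by omega, by omega, ?_⟩
  rw [coeff_X_pow_mul_X_pow_mul_add_pow a₁ a₂ hk]
  exact hp.choose_ne_zero_of_lt (by omega) hk
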